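/- arXiv:1710.02066 — 2 statements merged into one kernel-verified Lean document; each statement's English description precedes it below -/
import Mathlib

section
/- For all positive parameters m, M_H, M_T, l, r > 0 and every configuration q = (q₁,q₂,q₃) ∈ ℝ³, the inertia matrix 𝕀(q) of the three-link planar biped is symmetric positive definite; in particular its leading principal minors are positive, the third one satisfying det 𝕀(q) ≥ (m r²/4)·(M_T l²)·(r²(4M_H + m)/4) > 0. -/
/-- Inertia matrix of the three-link planar biped. -/
noncomputable def Imat (m MH MT l r : ℝ) (q : Fin 3 → ℝ) : Matrix (Fin 3) (Fin 3) ℝ :=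
  !![(4*MH + 4*MT + 5*m)*r^2/4, -(m*r^2/2)*Real.cos (q 0 - q 1), MT*l*r*Real.cos (q 0 - q 2);
     -(m*r^2/2)*Real.cos (q 0 - q 1), m*r^2/4, 0;
     MT*l*r*Real.cos (q 0 - q 2), 0, MT*l^2]

/-!
The inertia matrix has the arrowhead shape `A = !![a, b, d; b, e, 0; d, 0, f]`. Completing the
square in the two decoupled coordinates gives
`e f · vᵀ A v = f (e y + b x)² + e (f z + d x)² + (det A) x²`,
so such a matrix with `e, f > 0` is positive definite as soon as `det A > 0`. For the biped,
`det 𝕀(q)` is the stated lower bound plus `(M_T l² m r⁴ / 4) (m sin²(q₁ - q₂) + M_T sin²(q₁ - q₃))`,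
and the leading minors are positive because `𝕀(q)` is positive definite.
-/

namespace Matrix

theorem det_arrowhead {R : Type*} [CommRing R] (a b d e f : R) :
    !![a, b, d; b, e, 0; d, 0, f].det = a*e*f - b^2*f - d^2*e := by
  simp only [det_fin_three, of_apply, cons_val', cons_val_zero, cons_val_fin_one, cons_val_one,
    cons_val, mul_zero, sub_zero, zero_mul, add_zero]
  ring

theorem posDef_arrowhead_of_det_pos {R : Type*} [CommRing R] [LinearOrder R]
    [IsStrictOrderedRing R] [StarRing R] [TrivialStar R] [StarOrderedRing R] {a b d e f : R}
    (he : 0 < e) (hf : 0 < f) (hdet : 0 < !![a, b, d; b, e, 0; d, 0, f].det) :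
    !![a, b, d; b, e, 0; d, 0, f].PosDef := by
  rw [det_arrowhead] at hdet
  refine posDef_iff_dotProduct_mulVec.mpr ⟨?_, fun v hv => ?_⟩
  · rw [isHermitian_iff_isSymm]
    exact IsSymm.ext fun i j => by fin_cases i <;> fin_cases j <;> rfl
  set x := v 0
  set y := v 1
  set z := v 2
  have hquad : star v ⬝ᵥ (!![a, b, d; b, e, 0; d, 0, f] *ᵥ v)
      = a*x^2 + e*y^2 + f*z^2 + 2*b*x*y + 2*d*x*z := by
    simp only [dotProduct, Pi.star_apply, star_trivial, mulVec, of_apply, cons_val',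
      cons_val_fin_one, Fin.sum_univ_three, cons_val_zero, cons_val_one, cons_val, zero_mul,
      add_zero]
    ring
  have hsquares : e * f * (a*x^2 + e*y^2 + f*z^2 + 2*b*x*y + 2*d*x*z)
      = f * (e*y + b*x)^2 + e * (f*z + d*x)^2 + (a*e*f - b^2*f - d^2*e) * x^2 := by ring
  rw [hquad]
  refine pos_of_mul_pos_right (hsquares ▸ ?_) (mul_pos he hf).le
  by_cases hx : x = 0
  · have hyz : y ≠ 0 ∨ z ≠ 0 := by
      by_contra! h
      exact hv (funext fun i => by fin_cases i <;> simp [x, y, z, hx, h.1, h.2])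
    simp only [hx, mul_zero, add_zero, ne_eq, OfNat.ofNat_ne_zero, not_false_eq_true, zero_pow]
    rcases hyz with hy | hz
    · positivity
    · positivity
  · positivity

end Matrix

theorem Imat_det (m MH MT l r : ℝ) (q : Fin 3 → ℝ) :
    (Imat m MH MT l r q).det = (m*r^2/4) * (MT*l^2) * (r^2*(4*MH + m)/4)
      + MT*l^2*m*r^4/4 * (m * Real.sin (q 0 - q 1)^2 + MT * Real.sin (q 0 - q 2)^2) := by
  rw [Imat, Matrix.det_arrowhead, Real.sin_sq, Real.sin_sq]
  ring

/-- For all positive parameters and every configuration, the inertia matrix is symmetric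
positive definite; in particular its leading principal minors are positive, the third one
satisfying `det 𝕀(q) ≥ (m r²/4)·(M_T l²)·(r²(4M_H + m)/4) > 0`. -/
theorem inertia_posdef (m MH MT l r : ℝ) (hm : 0 < m) (hMH : 0 < MH) (hMT : 0 < MT)
    (hl : 0 < l) (hr : 0 < r) (q : Fin 3 → ℝ) :
    (Imat m MH MT l r q).IsSymm ∧
    (Imat m MH MT l r q).PosDef ∧
    0 < Imat m MH MT l r q 0 0 ∧
    0 < Imat m MH MT l r q 0 0 * Imat m MH MT l r q 1 1
        - Imat m MH MT l r q 0 1 * Imat m MH MT l r q 1 0 ∧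
    0 < (Imat m MH MT l r q).det ∧
    (Imat m MH MT l r q).det ≥ (m*r^2/4) * (MT*l^2) * (r^2*(4*MH + m)/4) ∧
    0 < (m*r^2/4) * (MT*l^2) * (r^2*(4*MH + m)/4) := by
  have hbound : 0 < (m*r^2/4) * (MT*l^2) * (r^2*(4*MH + m)/4) := by positivity
  have hdet : (Imat m MH MT l r q).det ≥ (m*r^2/4) * (MT*l^2) * (r^2*(4*MH + m)/4) := by
    rw [Imat_det]
    exact le_add_of_nonneg_right (by positivity)
  have hpos : (Imat m MH MT l r q).PosDef :=
    Matrix.posDef_arrowhead_of_det_pos (by positivity) (by positivity) (hbound.trans_le hdet)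
  have hminor := (hpos.submatrix (Fin.castLE_injective (by norm_num : 2 ≤ 3))).det_pos
  rw [Matrix.det_fin_two] at hminor
  exact ⟨Matrix.isHermitian_iff_isSymm.mp hpos.isHermitian, hpos, hpos.diag_pos, hminor,
    hpos.det_pos, hdet, hbound⟩
end

section
/- For every twice differentiable curve q : ℝ → ℝ³ and every t ∈ ℝ, the Euler–Lagrange expression of the kinetic Lagrangian L(q,q̇) = (1/2) q̇ᵀ 𝕀(q) q̇ equals the stated covariant acceleration: for each i ∈ {1,2,3}, d/dt ( ∑ⱼ 𝕀(q(t))ᵢⱼ q̇ⱼ(t) ) − (1/2) ∂/∂qᵢ ( q̇(t)ᵀ 𝕀(q) q̇(t) )|_{q = q(t)} = ( 𝕀(q(t)) q̈(t) + Γ(q(t),q̇(t)) q̇(t) )ᵢ. That is, the matrix Γ gives exactly the Christoffel (quadratic-velocity) forces of the Levi-Civita connection of 𝕀. -/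
/-- Christoffel (quadratic-velocity) matrix `Γ(q,q̇)` of the three-link planar biped. -/
noncomputable def Gammamat (m MT l r : ℝ) (q v : Fin 3 → ℝ) : Matrix (Fin 3) (Fin 3) ℝ :=
  !![0, -(m*r^2/2)*Real.sin (q 0 - q 1) * v 1, MT*l*r*Real.sin (q 0 - q 2) * v 2;
     (m*r^2/2)*Real.sin (q 0 - q 1) * v 0, 0, 0;
     -(MT*l*r)*Real.sin (q 0 - q 2) * v 0, 0, 0]


/-!
Differentiating the momentum `𝕀(q) q̇` along the curve gives `𝕀(q) q̈ + (∂_{q̇} 𝕀)(q) q̇`, while the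
partial derivative of the kinetic energy in `qᵢ` is `q̇ᵀ (∂_{eᵢ} 𝕀)(q) q̇`. Both only involve the
directional derivative of `𝕀`, whose only nonzero entries come from `cos (q₁ - q₂)` and
`cos (q₁ - q₃)`; the identity `(∂_v 𝕀) v - ½ vᵀ (∂_{eᵢ} 𝕀) v = Γ(q, v) v` is then checked
entrywise.
-/

section MatrixCurve

variable {n : Type*} [Fintype n] {A : ℝ → Matrix n n ℝ} {A' : Matrix n n ℝ} {t : ℝ}

theorem hasDerivAt_sum_apply_mul_apply {v : ℝ → n → ℝ} {v' : n → ℝ}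
    (hA : ∀ i j, HasDerivAt (fun s => A s i j) (A' i j) t) (hv : HasDerivAt v v' t) (i : n) :
    HasDerivAt (fun s => ∑ j, A s i j * v s j) (∑ j, (A' i j * v t j + A t i j * v' j)) t :=
  HasDerivAt.fun_sum fun j _ => (hA i j).mul (hasDerivAt_pi.mp hv j)

theorem hasDerivAt_sum_sum_apply_mul_mul (hA : ∀ i j, HasDerivAt (fun s => A s i j) (A' i j) t)
    (w : n → ℝ) :
    HasDerivAt (fun s => ∑ i, ∑ j, A s i j * w i * w j) (∑ i, ∑ j, A' i j * w i * w j) t :=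
  HasDerivAt.fun_sum fun i _ => HasDerivAt.fun_sum fun j _ => ((hA i j).mul_const _).mul_const _

end MatrixCurve

noncomputable def ImatDeriv (m MT l r : ℝ) (q v : Fin 3 → ℝ) : Matrix (Fin 3) (Fin 3) ℝ :=
  !![0, (m*r^2/2)*Real.sin (q 0 - q 1) * (v 0 - v 1), -(MT*l*r)*Real.sin (q 0 - q 2) * (v 0 - v 2);
     (m*r^2/2)*Real.sin (q 0 - q 1) * (v 0 - v 1), 0, 0;
     -(MT*l*r)*Real.sin (q 0 - q 2) * (v 0 - v 2), 0, 0]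

theorem hasDerivAt_Imat_apply (m MH MT l r : ℝ) {γ : ℝ → Fin 3 → ℝ} {v : Fin 3 → ℝ} {t : ℝ}
    (hγ : HasDerivAt γ v t) (i j : Fin 3) :
    HasDerivAt (fun s => Imat m MH MT l r (γ s) i j) (ImatDeriv m MT l r (γ t) v i j) t := by
  have hcos (k : Fin 3) : HasDerivAt (fun s => Real.cos (γ s 0 - γ s k))
      (-Real.sin (γ t 0 - γ t k) * (v 0 - v k)) t :=
    ((hasDerivAt_pi.mp hγ 0).sub (hasDerivAt_pi.mp hγ k)).cos
  fin_cases i <;> fin_cases j <;>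
    simp only [Imat, ImatDeriv, Fin.isValue, neg_mul, Fin.zero_eta, Fin.mk_one, Fin.reduceFinMk,
      Matrix.of_apply, Matrix.cons_val', Matrix.cons_val, Matrix.cons_val_zero,
      Matrix.cons_val_one, Matrix.cons_val_fin_one] <;>
    first
    | exact hasDerivAt_const _ _
    | exact ((hcos 1).const_mul _).fun_neg.congr_deriv (by ring)
    | exact ((hcos 2).const_mul _).congr_deriv (by ring)

theorem sum_ImatDeriv_sub_half_eq_sum_Gammamat (m MT l r : ℝ) (q v : Fin 3 → ℝ) (i : Fin 3) :
    ∑ j, ImatDeriv m MT l r q v i j * v j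
      - 1/2 * ∑ i', ∑ j, ImatDeriv m MT l r q (Pi.single i 1) i' j * v i' * v j
    = ∑ j, Gammamat m MT l r q v i j * v j := by
  fin_cases i <;> simp [ImatDeriv, Gammamat, Fin.sum_univ_three] <;> ring

theorem euler_lagrange_eq_covariant_accel_general (m MH MT l r : ℝ)
    (q : ℝ → Fin 3 → ℝ) (hq : ContDiff ℝ 2 q) (t : ℝ) (i : Fin 3) :
    deriv (fun s => ∑ j, Imat m MH MT l r (q s) i j * deriv q s j) t
      - (1/2) * deriv (fun a => ∑ i', ∑ j,
          Imat m MH MT l r (Function.update (q t) i a) i' j * deriv q t i' * deriv q t j)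
          (q t i)
    = (∑ j, Imat m MH MT l r (q t) i j * deriv (deriv q) t j)
      + (∑ j, Gammamat m MT l r (q t) (deriv q t) i j * deriv q t j) := by
  have hvel : HasDerivAt q (deriv q t) t := (hq.differentiable two_ne_zero t).hasDerivAt
  have hacc : HasDerivAt (deriv q) (deriv (deriv q) t) t :=
    (hq.differentiable_deriv_two t).hasDerivAt
  have hpartial := hasDerivAt_Imat_apply m MH MT l r (hasDerivAt_update (q t) i (q t i))
  rw [Function.update_eq_self] at hpartial
  rw [(hasDerivAt_sum_apply_mul_apply (hasDerivAt_Imat_apply m MH MT l r hvel) hacc i).deriv,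
    (hasDerivAt_sum_sum_apply_mul_mul hpartial (deriv q t)).deriv, Finset.sum_add_distrib,
    ← sum_ImatDeriv_sub_half_eq_sum_Gammamat]
  ring

/-- For every twice differentiable curve `q : ℝ → ℝ³`, the Euler–Lagrange expression of the
kinetic Lagrangian `L = (1/2) q̇ᵀ 𝕀(q) q̇` equals the covariant acceleration
`(𝕀(q) q̈ + Γ(q,q̇) q̇)ᵢ`: the matrix `Γ` gives exactly the Christoffel (quadratic-velocity)
forces of the Levi-Civita connection of `𝕀`. -/
theorem euler_lagrange_eq_covariant_accel (m MH MT l r : ℝ)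
    (hm : 0 < m) (hMH : 0 < MH) (hMT : 0 < MT) (hl : 0 < l) (hr : 0 < r)
    (q : ℝ → Fin 3 → ℝ) (hq : ContDiff ℝ 2 q) (t : ℝ) (i : Fin 3) :
    deriv (fun s => ∑ j, Imat m MH MT l r (q s) i j * deriv q s j) t
      - (1/2) * deriv (fun a => ∑ i', ∑ j,
          Imat m MH MT l r (Function.update (q t) i a) i' j * deriv q t i' * deriv q t j)
          (q t i)
    = (∑ j, Imat m MH MT l r (q t) i j * deriv (deriv q) t j)
      + (∑ j, Gammamat m MT l r (q t) (deriv q t) i j * deriv q t j) :=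
  euler_lagrange_eq_covariant_accel_general m MH MT l r q hq t i
end
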